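/- Consider a withholding race: after L slots the adversary's private subDAG has accumulated weight A_L and the honest public subDAG weight H_L, where A_L ≥ a·α·L and H_L ≤ b·(1−α)·L for constants a, b > 0 and stake fraction α < 1/2. If honest weight over the same comparison region is fragmented into m ≥ 1 incomparable components each of weight at most H_L/m, and fork choice compares the adversary's single component against the heaviest honest component, then the adversary wins whenever a·α·L > b·(1−α)·L/m, i.e., whenever m > (b(1−α))/(a·α). In particular, for any α > 0 there exists a finite fragmentation level m making unbounded-horizon weight comparison unsafe. -/
import Mathlib


/-- Withholding race arithmetic: if A_L ≥ aαL, H_L ≤ b(1−α)L,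
honest weight is split into m ≥ 1 components each of weight ≤ H_L/m, and
m > b(1−α)/(aα), then the adversary's subDAG outweighs the heaviest honest
component; moreover for any α > 0 such a finite fragmentation level m exists. -/
theorem withholding_race (a b α L AL HL hmax m : ℝ)
    (ha : 0 < a) (hb : 0 < b) (hα0 : 0 < α) (hα : α < 1/2) (hL : 0 < L)
    (hm : 1 ≤ m)
    (hAL : a * α * L ≤ AL)
    (hHL : HL ≤ b * (1 - α) * L)
    (hfrag : hmax ≤ HL / m)
    (hmbig : b * (1 - α) / (a * α) < m) :
    (b * (1 - α) * L / m < a * α * L) ∧ hmax < AL ∧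
      ∃ m' : ℕ, b * (1 - α) / (a * α) < (m' : ℝ) := by
  have hm0 : (0:ℝ) < m := lt_of_lt_of_le one_pos hm
  have haα : 0 < a * α := mul_pos ha hα0
  have key : b * (1 - α) < a * α * m := by
    have := (div_lt_iff₀ haα).mp hmbig
    linarith [this]
  have h1 : b * (1 - α) * L / m < a * α * L := by
    rw [div_lt_iff₀ hm0]
    nlinarith
  refine ⟨h1, ?_, exists_nat_gt _⟩
  have h2 : HL / m ≤ b * (1 - α) * L / m := (div_le_div_iff_of_pos_right hm0).mpr hHL
  linarith
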